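/- arXiv:2306.13001 — 4 statements merged into one kernel-verified Lean document; each statement's English description precedes it below -/
import Mathlib

section
/- If u^{(m+2,n)} = -(f/a)^{(m,n)} - u^{(m,n+2)} - Σ_{i=0}^{m} Σ_{j=0}^{n} C(m,i)C(n,j)[(a_x/a)^{(m-i,n-j)} u^{(i+1,j)} + (a_y/a)^{(m-i,n-j)} u^{(i,j+1)}] holds for all (m,n), then every partial derivative u^{(p,q)} with p+q ≤ M+1 can be written uniquely as a linear combination of the derivatives u^{(m,n)} with m ∈ {0,1} and m+n ≤ p+q, plus a linear combination of the derivatives f^{(m,n)} with m+n ≤ p+q-2, where the coefficients depend only on the partial derivatives of a of total order at most M. -/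
/-!
The recursion computes `u` column by column in the `x`-order: the columns `m = 0, 1` of `u` and
the array `F` are free data, and `u (p, q)` is determined by the data of total order at most
`p + q`. Hence the solutions depend linearly on these data, and the coefficient of a data entry
in `u (p, q)` is the value at `(p, q)` of the solution in which that entry is `1` and all others
are `0`. Testing a representation on these solutions forces its coefficients, which gives
uniqueness.
-/

/-- `Λ_K = {(m,n) ∈ ℕ² : m + n ≤ K}`. -/
def Lam (K : ℕ) : Finset (ℕ × ℕ) :=
  (Finset.range (K + 1) ×ˢ Finset.range (K + 1)).filter fun mn => mn.1 + mn.2 ≤ K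

/-- `Λ_K^1 = {(m,n) ∈ Λ_K : m ∈ {0,1}}`. -/
def Lam1 (K : ℕ) : Finset (ℕ × ℕ) := (Lam K).filter fun mn => mn.1 ≤ 1

/-- `Λ_{K-2} = {(m,n) ∈ ℕ² : m + n + 2 ≤ K}` (empty when `K < 2`). -/
def LamSub2 (K : ℕ) : Finset (ℕ × ℕ) :=
  (Finset.range (K + 1) ×ˢ Finset.range (K + 1)).filter fun mn => mn.1 + mn.2 + 2 ≤ K

/-- The recursion `u^{(m+2,n)} = -(f/a)^{(m,n)} - u^{(m,n+2)}
  - Σ_{i,j} C(m,i)C(n,j)[(a_x/a)^{(m-i,n-j)} u^{(i+1,j)} + (a_y/a)^{(m-i,n-j)} u^{(i,j+1)}]`,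
where `cx`, `cy`, `F` encode the derivative arrays of `a_x/a`, `a_y/a` and `f/a`. -/
def SatisfiesRec (cx cy F u : ℕ × ℕ → ℝ) : Prop :=
  ∀ m n : ℕ,
    u (m + 2, n) = -F (m, n) - u (m, n + 2) -
      ∑ i ∈ Finset.range (m + 1), ∑ j ∈ Finset.range (n + 1),
        (m.choose i : ℝ) * (n.choose j : ℝ) *
          (cx (m - i, n - j) * u (i + 1, j) + cy (m - i, n - j) * u (i, j + 1))

open Finset

theorem mem_Lam {K : ℕ} {mn : ℕ × ℕ} : mn ∈ Lam K ↔ mn.1 + mn.2 ≤ K := by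
  simp only [Lam, mem_filter, mem_product, mem_range]
  omega

theorem mem_Lam1 {K : ℕ} {mn : ℕ × ℕ} : mn ∈ Lam1 K ↔ mn.1 ≤ 1 ∧ mn.1 + mn.2 ≤ K := by
  simp only [Lam1, Lam, mem_filter, mem_product, mem_range]
  omega

theorem mem_LamSub2 {K : ℕ} {mn : ℕ × ℕ} : mn ∈ LamSub2 K ↔ mn.1 + mn.2 + 2 ≤ K := by
  simp only [LamSub2, mem_filter, mem_product, mem_range]
  omega

noncomputable def recSolution (cx cy g F : ℕ × ℕ → ℝ) : ℕ × ℕ → ℝ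
  | (0, n) => g (0, n)
  | (1, n) => g (1, n)
  | (m + 2, n) =>
    -F (m, n) - recSolution cx cy g F (m, n + 2) -
      ∑ i ∈ (range (m + 1)).attach, ∑ j ∈ range (n + 1),
        (m.choose i : ℝ) * (n.choose j : ℝ) *
          (cx (m - i, n - j) * recSolution cx cy g F (i + 1, j) +
            cy (m - i, n - j) * recSolution cx cy g F (i, j + 1))
termination_by mn => mn.1
decreasing_by all_goals grind

theorem recSolution_of_le_one {cx cy g F : ℕ × ℕ → ℝ} {mn : ℕ × ℕ} (h : mn.1 ≤ 1) :
    recSolution cx cy g F mn = g mn := by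
  obtain ⟨_ | _ | m, n⟩ := mn
  · rw [recSolution]
  · rw [recSolution]
  · simp at h

theorem satisfiesRec_recSolution (cx cy g F : ℕ × ℕ → ℝ) :
    SatisfiesRec cx cy F (recSolution cx cy g F) := by
  intro m n
  rw [recSolution, ← sum_attach (range (m + 1))]

namespace SatisfiesRec

def solutions (cx cy : ℕ × ℕ → ℝ) : Submodule ℝ ((ℕ × ℕ → ℝ) × (ℕ × ℕ → ℝ)) where
  carrier := {Fu | SatisfiesRec cx cy Fu.1 Fu.2}
  add_mem' := by
    rintro ⟨F, u⟩ ⟨F', u'⟩ (hu : SatisfiesRec cx cy F u) (hu' : SatisfiesRec cx cy F' u') m n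
    simp only [Prod.mk_add_mk, Pi.add_apply, mul_add, sum_add_distrib, hu m n, hu' m n]
    ring
  zero_mem' := fun m n => by simp
  smul_mem' := by
    rintro r ⟨F, u⟩ (hu : SatisfiesRec cx cy F u) m n
    simp only [Prod.smul_mk, Pi.smul_apply, smul_eq_mul, hu m n, mul_sub, mul_sum]
    congr 1
    · ring
    · exact sum_congr rfl fun _ _ => sum_congr rfl fun _ _ => by ring

variable {cx cy F F' u v : ℕ × ℕ → ℝ}

theorem eqOn_of_eqOn_initial (K : ℕ) (hu : SatisfiesRec cx cy F u) (hv : SatisfiesRec cx cy F' v)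
    (hF : ∀ mn ∈ LamSub2 K, F mn = F' mn) (hinit : ∀ mn ∈ Lam1 K, u mn = v mn) :
    ∀ pq ∈ Lam K, u pq = v pq := by
  suffices ∀ p q, p + q ≤ K → u (p, q) = v (p, q) by
    rintro ⟨p, q⟩ hpq
    exact this p q (mem_Lam.mp hpq)
  intro p
  induction p using Nat.strong_induction_on with
  | _ p ih =>
    intro q hpq
    obtain _ | _ | m := p
    · exact hinit _ (mem_Lam1.mpr ⟨by simp, hpq⟩)
    · exact hinit _ (mem_Lam1.mpr ⟨le_rfl, hpq⟩)
    · rw [hu m q, hv m q, hF _ (mem_LamSub2.mpr (by omega)), ih m (by omega) (q + 2) (by omega)]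
      refine congrArg _ (sum_congr rfl fun i hi => sum_congr rfl fun j hj => ?_)
      rw [mem_range] at hi hj
      rw [ih (i + 1) (by omega) j (by omega), ih i (by omega) (j + 1) (by omega)]

end SatisfiesRec

/-- The coefficients `a^u_{p,q,m,n}` and `a^f_{p,q,m,n}` of the paper, as `coeffU cx cy (p, q) (m, n)`
and `coeffF cx cy (p, q) (m, n)`. -/
noncomputable def coeffU (cx cy : ℕ × ℕ → ℝ) (pq mn : ℕ × ℕ) : ℝ :=
  recSolution cx cy (Pi.single mn 1) 0 pq

noncomputable def coeffF (cx cy : ℕ × ℕ → ℝ) (pq mn : ℕ × ℕ) : ℝ :=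
  recSolution cx cy 0 (Pi.single mn 1) pq

def IsExpansionAt (cx cy : ℕ × ℕ → ℝ) (pq : ℕ × ℕ) (a b : ℕ × ℕ → ℝ) : Prop :=
  ∀ u F : ℕ × ℕ → ℝ, SatisfiesRec cx cy F u →
    u pq = (∑ mn ∈ Lam1 (pq.1 + pq.2), a mn * u mn) + ∑ mn ∈ LamSub2 (pq.1 + pq.2), b mn * F mn

theorem isExpansionAt_coeff (cx cy : ℕ × ℕ → ℝ) (pq : ℕ × ℕ) :
    IsExpansionAt cx cy pq (coeffU cx cy pq) (coeffF cx cy pq) := by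
  intro u F hu
  set K := pq.1 + pq.2
  let w : (ℕ × ℕ → ℝ) × (ℕ × ℕ → ℝ) :=
    (∑ mn ∈ Lam1 K, u mn • (0, recSolution cx cy (Pi.single mn 1) 0)) +
      ∑ mn ∈ LamSub2 K, F mn • (Pi.single mn 1, recSolution cx cy 0 (Pi.single mn 1))
  have hw : w ∈ SatisfiesRec.solutions cx cy :=
    add_mem (sum_mem fun _ _ => Submodule.smul_mem _ _ (satisfiesRec_recSolution cx cy _ _))
      (sum_mem fun _ _ => Submodule.smul_mem _ _ (satisfiesRec_recSolution cx cy _ _))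
  have hw₁ (mn : ℕ × ℕ) : w.1 mn = ∑ k ∈ LamSub2 K, F k * (Pi.single k 1 : ℕ × ℕ → ℝ) mn := by
    simp [w, Prod.fst_sum, Finset.sum_apply]
  have hw₂ (mn : ℕ × ℕ) : w.2 mn = (∑ k ∈ Lam1 K, u k * recSolution cx cy (Pi.single k 1) 0 mn) +
      ∑ k ∈ LamSub2 K, F k * recSolution cx cy 0 (Pi.single k 1) mn := by
    simp [w, Prod.snd_sum, Finset.sum_apply]
  have hF : ∀ mn ∈ LamSub2 K, F mn = w.1 mn := by
    intro mn hmn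
    simp [hw₁, Pi.single_apply, hmn]
  have hinit : ∀ mn ∈ Lam1 K, u mn = w.2 mn := by
    intro mn hmn
    simp [hw₂, recSolution_of_le_one (mem_Lam1.mp hmn).1, Pi.single_apply, hmn]
  -- `w` agrees with `(F, u)` on the data of order at most `K`, so it agrees with `u` at `pq`.
  rw [hu.eqOn_of_eqOn_initial K hw hF hinit pq (mem_Lam.mpr le_rfl), hw₂]
  simp only [coeffU, coeffF, mul_comm]

namespace IsExpansionAt

variable {cx cy : ℕ × ℕ → ℝ} {pq : ℕ × ℕ} {a b : ℕ × ℕ → ℝ}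

theorem eq_coeffU (h : IsExpansionAt cx cy pq a b) {mn : ℕ × ℕ} (hmn : mn ∈ Lam1 (pq.1 + pq.2)) :
    a mn = coeffU cx cy pq mn := by
  rw [coeffU, h _ _ (satisfiesRec_recSolution cx cy _ _),
    sum_congr rfl fun k hk => by rw [recSolution_of_le_one (mem_Lam1.mp hk).1]]
  simp [Pi.single_apply, hmn]

theorem eq_coeffF (h : IsExpansionAt cx cy pq a b) {mn : ℕ × ℕ} (hmn : mn ∈ LamSub2 (pq.1 + pq.2)) :
    b mn = coeffF cx cy pq mn := by
  rw [coeffF, h _ _ (satisfiesRec_recSolution cx cy _ _),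
    sum_congr rfl fun k hk => by rw [recSolution_of_le_one (mem_Lam1.mp hk).1]]
  simp [Pi.single_apply, hmn]

end IsExpansionAt

/-- Every `u^{(p,q)}` with `p+q ≤ M+1` is uniquely a linear combination of the `u^{(m,n)}`,
`m ∈ {0,1}`, `m+n ≤ p+q`, plus a linear combination of the `f^{(m,n)}`, `m+n ≤ p+q-2`,
with coefficients depending only on the derivative data of `a` (through `cx`, `cy`). -/
theorem stmt1 (M : ℕ) (cx cy : ℕ × ℕ → ℝ) :
    ∃! c : ((ℕ × ℕ) → (ℕ × ℕ) → ℝ) × ((ℕ × ℕ) → (ℕ × ℕ) → ℝ),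
      (∀ pq mn : ℕ × ℕ, mn ∉ Lam1 (pq.1 + pq.2) → c.1 pq mn = 0) ∧
      (∀ pq mn : ℕ × ℕ, ¬ (mn.1 + mn.2 + 2 ≤ pq.1 + pq.2) → c.2 pq mn = 0) ∧
      (∀ pq mn : ℕ × ℕ, pq ∉ Lam (M + 1) → c.1 pq mn = 0 ∧ c.2 pq mn = 0) ∧
      (∀ u F : ℕ × ℕ → ℝ, SatisfiesRec cx cy F u →
        ∀ pq ∈ Lam (M + 1),
          u pq = (∑ mn ∈ Lam1 (pq.1 + pq.2), c.1 pq mn * u mn) +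
                 ∑ mn ∈ LamSub2 (pq.1 + pq.2), c.2 pq mn * F mn) := by
  refine ⟨(fun pq mn => if pq ∈ Lam (M + 1) ∧ mn ∈ Lam1 (pq.1 + pq.2) then coeffU cx cy pq mn else 0,
      fun pq mn => if pq ∈ Lam (M + 1) ∧ mn ∈ LamSub2 (pq.1 + pq.2) then coeffF cx cy pq mn else 0),
    ⟨fun pq mn h => by simp [h], fun pq mn h => by simp [mem_LamSub2, h],
      fun pq mn h => by simp [h], fun u F hu pq hpq => ?_⟩, ?_⟩
  · rw [isExpansionAt_coeff cx cy pq u F hu]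
    congr 1 <;> exact sum_congr rfl fun mn hmn => by simp [hpq, hmn]
  · rintro ⟨c₁, c₂⟩ ⟨h₁, h₂, h₃, h₄⟩
    have hexp (pq) (hpq : pq ∈ Lam (M + 1)) : IsExpansionAt cx cy pq (c₁ pq) (c₂ pq) :=
      fun u F hu => h₄ u F hu pq hpq
    ext pq mn <;> dsimp only <;> split_ifs with h
    · exact (hexp pq h.1).eq_coeffU h.2
    · by_cases hpq : pq ∈ Lam (M + 1)
      · exact h₁ pq mn fun hmn => h ⟨hpq, hmn⟩
      · exact (h₃ pq mn hpq).1
    · exact (hexp pq h.1).eq_coeffF h.2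
    · by_cases hpq : pq ∈ Lam (M + 1)
      · exact h₂ pq mn fun hmn => h ⟨hpq, mem_LamSub2.mpr hmn⟩
      · exact (h₃ pq mn hpq).2
end

section
/- The stencil coefficients c_{-1,-1}=c_{-1,1}=c_{1,-1}=c_{1,1}=-1, c_{-1,0}=c_{1,0}=c_{0,-1}=c_{0,1}=-4, c_{0,0}=20 satisfy: (a) Σ_{k,ℓ} c_{k,ℓ} = 0; (b) c_{0,0} > 0 and c_{k,ℓ} ≤ 0 for (k,ℓ) ≠ (0,0); and (c) Σ_{k=-1}^{1} Σ_{ℓ=-1}^{1} c_{k,ℓ} p(k,ℓ) = 0 for every harmonic polynomial p of total degree ≤ 7. -/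
open MvPolynomial

/-- The 9-point stencil: center `20`, edge midpoints `-4`, corners `-1`. -/
noncomputable def c5 : ℤ → ℤ → ℝ := fun k l =>
  if k = 0 ∧ l = 0 then 20 else if k = 0 ∨ l = 0 then -4 else -1

/-!
Writing `p = ∑ c_{ab} X^a Y^b`, the stencil sum of `p` is `∑ c_{ab} μ(a,b)`, where the moment
`μ(a,b)` of the stencil vanishes unless `a` and `b` are both even and `(a,b) ≠ (0,0)`; in degree
`≤ 7` only nine moments survive, `-12` on the axes and `-4` off them. Harmonicity of `p` says
`(a+1)(a+2) c_{a+2,b} + (b+1)(b+2) c_{a,b+2} = 0`, and these relations for `a + b ≤ 4` give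
`c₂₀ + c₀₂ = 0`, `3(c₄₀ + c₀₄) + c₂₂ = 0`, `c₄₂ + c₂₄ = 0` and `c₆₀ + c₀₆ = 0`, which make
`∑ c_{ab} μ(a,b)` vanish.
-/

open Finset

theorem sum_neg_one_zero_one {M : Type*} [AddCommMonoid M] (f : ℤ → M) :
    ∑ k ∈ ({-1, 0, 1} : Finset ℤ), f k = f (-1) + f 0 + f 1 := by
  simp [add_assoc]

theorem c5_nonpos {k l : ℤ} (h : ¬(k = 0 ∧ l = 0)) : c5 k l ≤ 0 := by
  unfold c5
  split_ifs <;> norm_num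

-- The centre, the four edge midpoints and the four corners contribute the three terms.
noncomputable def stencilMoment (a b : ℕ) : ℝ :=
  20 * 0 ^ a * 0 ^ b - 4 * (((-1) ^ a + 1) * 0 ^ b + 0 ^ a * ((-1) ^ b + 1))
    - ((-1) ^ a + 1) * ((-1) ^ b + 1)

theorem stencil_sum_pow_mul_pow (a b : ℕ) :
    ∑ k ∈ ({-1, 0, 1} : Finset ℤ), ∑ l ∈ ({-1, 0, 1} : Finset ℤ),
      c5 k l * ((k : ℝ) ^ a * (l : ℝ) ^ b) = stencilMoment a b := by
  simp only [sum_neg_one_zero_one, c5, stencilMoment]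
  norm_num
  ring

theorem stencilMoment_of_odd_left {a : ℕ} (ha : Odd a) (b : ℕ) : stencilMoment a b = 0 := by
  simp [stencilMoment, ha.neg_one_pow, ha.pos.ne']

theorem stencilMoment_of_odd_right (a : ℕ) {b : ℕ} (hb : Odd b) : stencilMoment a b = 0 := by
  simp [stencilMoment, hb.neg_one_pow, hb.pos.ne']

def evenExponents : Finset (ℕ × ℕ) :=
  {(0, 0), (2, 0), (0, 2), (4, 0), (2, 2), (0, 4), (6, 0), (4, 2), (2, 4), (0, 6)}

theorem mem_evenExponents_of_stencilMoment_ne_zero {a b : ℕ} (hab : a + b ≤ 7)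
    (h : stencilMoment a b ≠ 0) : (a, b) ∈ evenExponents := by
  obtain ⟨a, rfl⟩ | ha := Nat.even_or_odd a
  · obtain ⟨b, rfl⟩ | hb := Nat.even_or_odd b
    · have ha : a ≤ 3 := by omega
      have hb : b ≤ 3 := by omega
      interval_cases a <;> interval_cases b <;> first | omega | decide
    · exact absurd (stencilMoment_of_odd_right _ hb) h
  · exact absurd (stencilMoment_of_odd_left ha _) h

noncomputable def bideg (a b : ℕ) : Fin 2 →₀ ℕ := Finsupp.single 0 a + Finsupp.single 1 b

@[simp] theorem bideg_apply_zero (a b : ℕ) : bideg a b 0 = a := by simp [bideg]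

@[simp] theorem bideg_apply_one (a b : ℕ) : bideg a b 1 = b := by simp [bideg]

theorem bideg_apply (m : Fin 2 →₀ ℕ) : bideg (m 0) (m 1) = m := by
  ext i; fin_cases i <;> simp

theorem bideg_add_single_zero (a b n : ℕ) : bideg a b + Finsupp.single 0 n = bideg (a + n) b := by
  ext i; fin_cases i <;> simp

theorem bideg_add_single_one (a b n : ℕ) : bideg a b + Finsupp.single 1 n = bideg a (b + n) := by
  ext i; fin_cases i <;> simp

namespace MvPolynomial

theorem coeff_pderiv_pderiv {σ R : Type*} [CommSemiring R] (i : σ) (p : MvPolynomial σ R)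
    (m : σ →₀ ℕ) :
    coeff m (pderiv i (pderiv i p))
      = coeff (m + Finsupp.single i 2) p * ((m i + 1) * (m i + 2)) := by
  rw [coeff_pderiv, coeff_pderiv, add_assoc, ← Finsupp.single_add]
  simp only [Finsupp.add_apply, Finsupp.single_eq_same, Nat.cast_add, Nat.cast_one]
  ring

theorem coeff_bideg_of_laplacian_eq_zero {R : Type*} [CommSemiring R]
    {p : MvPolynomial (Fin 2) R}
    (hp : pderiv 0 (pderiv 0 p) + pderiv 1 (pderiv 1 p) = 0) (a b : ℕ) :
    coeff (bideg (a + 2) b) p * ((a + 1) * (a + 2))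
      + coeff (bideg a (b + 2)) p * ((b + 1) * (b + 2)) = 0 := by
  simpa [coeff_pderiv_pderiv, bideg_add_single_zero, bideg_add_single_one]
    using congrArg (coeff (bideg a b)) hp

end MvPolynomial

theorem stencil_sum_eval (p : MvPolynomial (Fin 2) ℝ) :
    ∑ k ∈ ({-1, 0, 1} : Finset ℤ), ∑ l ∈ ({-1, 0, 1} : Finset ℤ),
        c5 k l * eval (fun i => if i = 0 then (k : ℝ) else (l : ℝ)) p
      = ∑ m ∈ p.support, coeff m p * stencilMoment (m 0) (m 1) := by
  simp_rw [eval_eq', Fin.prod_univ_two, ← stencil_sum_pow_mul_pow, mul_sum]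
  conv_rhs => rw [sum_comm]; enter [2, k]; rw [sum_comm]
  refine sum_congr rfl fun k _ => sum_congr rfl fun l _ => sum_congr rfl fun m _ => ?_
  simp only [if_true, one_ne_zero, if_false]
  ring

theorem sum_support_eq_sum_evenExponents {p : MvPolynomial (Fin 2) ℝ} (hp : p.totalDegree ≤ 7) :
    ∑ m ∈ p.support, coeff m p * stencilMoment (m 0) (m 1)
      = ∑ q ∈ evenExponents, coeff (bideg q.1 q.2) p * stencilMoment q.1 q.2 := by
  have hinj : Set.InjOn (fun q : ℕ × ℕ => bideg q.1 q.2) evenExponents := fun q _ r _ h =>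
    Prod.ext (by simpa using DFunLike.congr_fun h 0) (by simpa using DFunLike.congr_fun h 1)
  calc _ = ∑ m ∈ evenExponents.image (fun q => bideg q.1 q.2),
          coeff m p * stencilMoment (m 0) (m 1) :=
        sum_congr_of_eq_on_inter (fun m hm hmT => ?_) (fun m _ hm => ?_) fun _ _ _ => rfl
    _ = _ := by rw [sum_image hinj]; simp
  · have hdeg : m 0 + m 1 ≤ 7 := by
      simpa [Finsupp.sum_fintype, Fin.sum_univ_two] using (le_totalDegree hm).trans hp
    by_contra h
    exact hmT (mem_image.2 ⟨_, mem_evenExponents_of_stencilMoment_ne_zero hdeg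
      (right_ne_zero_of_mul h), bideg_apply m⟩)
  · simp [notMem_support_iff.1 hm]

/-- The stencil with center `20`, edges `-4`, corners `-1` has zero coefficient sum,
satisfies the sign condition, and annihilates every harmonic polynomial of total
degree at most `7` on the lattice `{-1,0,1}²`. -/
theorem stmt5 :
    (∑ k ∈ ({-1, 0, 1} : Finset ℤ), ∑ l ∈ ({-1, 0, 1} : Finset ℤ), c5 k l = 0) ∧
    (0 < c5 0 0 ∧ ∀ k ∈ ({-1, 0, 1} : Finset ℤ), ∀ l ∈ ({-1, 0, 1} : Finset ℤ),
      ¬(k = 0 ∧ l = 0) → c5 k l ≤ 0) ∧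
    (∀ p : MvPolynomial (Fin 2) ℝ, p.totalDegree ≤ 7 →
      pderiv 0 (pderiv 0 p) + pderiv 1 (pderiv 1 p) = 0 →
      ∑ k ∈ ({-1, 0, 1} : Finset ℤ), ∑ l ∈ ({-1, 0, 1} : Finset ℤ),
        c5 k l * eval (fun i => if i = 0 then (k : ℝ) else (l : ℝ)) p = 0) := by
  refine ⟨by norm_num [sum_neg_one_zero_one, c5], ⟨by norm_num [c5], fun k _ l _ => c5_nonpos⟩, ?_⟩
  intro p hdeg hp
  have hrel := coeff_bideg_of_laplacian_eq_zero hp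
  rw [stencil_sum_eval, sum_support_eq_sum_evenExponents hdeg]
  norm_num [evenExponents, stencilMoment]
  linear_combination (-6) * hrel 0 0 - hrel 2 0 - hrel 0 2 - (2 / 5) * hrel 4 0
    - (4 / 15) * hrel 2 2 - (2 / 5) * hrel 0 4
end

section
/- A real square matrix A with positive diagonal entries, non-positive off-diagonal entries, all row sums non-negative, at least one row sum positive, and which is irreducible, is monotone: if Ax ≥ 0 componentwise then x ≥ 0 componentwise. In particular the discrete maximum principle holds: if (Ax)_i ≤ 0 for all i then max_i x_i ≤ 0 or x attains its maximum at an index with positive row sum. -/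
/-- An irreducibly diagonally dominant matrix with positive diagonal, non-positive
off-diagonal entries, non-negative row sums and at least one positive row sum
(an irreducible M-matrix) is monotone: `Ax ≥ 0` componentwise implies `x ≥ 0`. -/
theorem stmt9 (n : ℕ) (A : Matrix (Fin n) (Fin n) ℝ)
    (hdiag : ∀ i, 0 < A i i)
    (hoff : ∀ i j, i ≠ j → A i j ≤ 0)
    (hrow : ∀ i, 0 ≤ ∑ j, A i j)
    (hstrict : ∃ i, 0 < ∑ j, A i j)
    (hirr : ∀ i j : Fin n, i ≠ j →
      Relation.TransGen (fun p q : Fin n => p ≠ q ∧ A p q ≠ 0) i j) :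
    ∀ x : Fin n → ℝ, (∀ i, 0 ≤ A.mulVec x i) → ∀ i, 0 ≤ x i := by
  intro x hx
  by_contra hcon
  push_neg at hcon
  obtain ⟨i1, hi1⟩ := hcon
  have hne : (Finset.univ : Finset (Fin n)).Nonempty := ⟨i1, Finset.mem_univ _⟩
  obtain ⟨i0, -, hmin⟩ := Finset.exists_min_image Finset.univ x hne
  have hmin : ∀ j, x i0 ≤ x j := fun j => hmin j (Finset.mem_univ j)
  have hneg : x i0 < 0 := lt_of_le_of_lt (hmin i1) hi1
  -- if x p = x i0, then every neighbor q of p also satisfies x q = x i0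
  have key : ∀ p, x p = x i0 → ∀ q, A p q ≠ 0 → x q = x i0 := by
    intro p hp q hq
    have hsplit : A.mulVec x p
        = (∑ j, A p j * (x j - x i0)) + (∑ j, A p j) * x i0 := by
      simp only [Matrix.mulVec, dotProduct, mul_sub, Finset.sum_sub_distrib,
        Finset.sum_mul]
      ring
    have hterm : ∀ j ∈ Finset.univ, A p j * (x j - x i0) ≤ 0 := by
      intro j _
      rcases eq_or_ne j p with rfl | hne
      · rw [hp]; simp
      · exact mul_nonpos_of_nonpos_of_nonneg (hoff p j (Ne.symm hne))
          (sub_nonneg.mpr (hmin j))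
    have hsum1 : (∑ j, A p j * (x j - x i0)) ≤ 0 :=
      Finset.sum_nonpos hterm
    have hsum2 : (∑ j, A p j) * x i0 ≤ 0 :=
      mul_nonpos_of_nonneg_of_nonpos (hrow p) hneg.le
    have h0 : (∑ j, A p j * (x j - x i0)) = 0 := by
      have := hx p
      rw [hsplit] at this
      linarith
    have heach := (Finset.sum_eq_zero_iff_of_nonpos hterm).mp h0 q (Finset.mem_univ q)
    rcases mul_eq_zero.mp heach with h | h
    · exact absurd h hq
    · linarith [sub_eq_zero.mp h]
  -- all coordinates equal x i0
  have hall0 : ∀ j, Relation.TransGen (fun p q : Fin n => p ≠ q ∧ A p q ≠ 0) i0 j →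
      x j = x i0 := by
    intro j htg
    induction htg with
    | single h => exact key i0 rfl _ h.2
    | tail _ h ih => exact key _ ih _ h.2
  have hall : ∀ j, x j = x i0 := by
    intro j
    rcases eq_or_ne j i0 with rfl | hne
    · rfl
    · exact hall0 j (hirr i0 j (Ne.symm hne))
  obtain ⟨is, his⟩ := hstrict
  have : A.mulVec x is = (∑ j, A is j) * x i0 := by
    simp only [Matrix.mulVec, dotProduct, Finset.sum_mul]
    exact Finset.sum_congr rfl fun j _ => by rw [hall j]
  have hneg' : A.mulVec x is < 0 := by
    rw [this]; exact mul_neg_of_pos_of_neg his hneg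
  exact absurd (hx is) (not_le.mpr hneg')
end

section
/- With g⁻_{0,p,p} and g̃⁻_{1,p-1,p-1} etc. defined as the appropriate p-th Taylor coefficients along the interface curve of G_{0,p} and its flux, the determinant of the 2×2 system for (u₋^{(0,p)}, u₋^{(1,p-1)}) satisfies g⁻_{0,p,p}·g̃⁻_{1,p-1,p-1} - g⁻_{1,p-1,p}·g̃⁻_{0,p,p-1} = a₋ · p · ((r'(t*))² + (s'(t*))²)^p / (p!)², which is strictly positive when a₋ > 0 and (r'(t*), s'(t*)) ≠ (0,0). -/
/-- `G_{m,n}(x,y) = Σ_{ℓ=0}^{⌊n/2⌋} (-1)^ℓ x^{m+2ℓ} y^{n-2ℓ} / ((m+2ℓ)!(n-2ℓ)!)`. -/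
noncomputable def Gpoly (m n : ℕ) (x y : ℝ) : ℝ :=
  ∑ l ∈ Finset.range (n / 2 + 1),
    (-1 : ℝ) ^ l * x ^ (m + 2 * l) * y ^ (n - 2 * l) /
      ((Nat.factorial (m + 2 * l) : ℝ) * (Nat.factorial (n - 2 * l) : ℝ))

/-- Taylor coefficient `g⁻_{m,n,q} = (1/q!)(d^q/dt^q)[G_{m,n}(r(t)-x*, s(t)-y*)]` at `t*`. -/
noncomputable def gcoef (r s : ℝ → ℝ) (tstar : ℝ) (m n q : ℕ) : ℝ :=
  (1 / (Nat.factorial q : ℝ)) *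
    iteratedDeriv q (fun t => Gpoly m n (r t - r tstar) (s t - s tstar)) tstar

/-- Flux coefficient `g̃⁻_{m,n,q} = a₋ (1/q!)(d^q/dt^q)[∇G_{m,n}·(s'(t),-r'(t))]` at `t*`. -/
noncomputable def gtcoef (am : ℝ) (r s : ℝ → ℝ) (tstar : ℝ) (m n q : ℕ) : ℝ :=
  am * (1 / (Nat.factorial q : ℝ)) *
    iteratedDeriv q
      (fun t =>
        deriv (fun x => Gpoly m n x (s t - s tstar)) (r t - r tstar) * deriv s t -
          deriv (fun y => Gpoly m n (r t - r tstar) y) (s t - s tstar) * deriv r t)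
      tstar

open Finset ContDiff


section wrappers
variable {f g : ℝ → ℝ} {n : ℕ} {x : ℝ}

lemma itd_add (hf : ContDiff ℝ ∞ f) (hg : ContDiff ℝ ∞ g) :
    iteratedDeriv n (fun t => f t + g t) x = iteratedDeriv n f x + iteratedDeriv n g x := by
  rw [← iteratedDerivWithin_univ, ← iteratedDerivWithin_univ (f := f),
    ← iteratedDerivWithin_univ (f := g)]
  exact iteratedDerivWithin_add (Set.mem_univ x) uniqueDiffOn_univ
    ((hf.of_le (by exact_mod_cast le_top)).contDiffWithinAt)
    ((hg.of_le (by exact_mod_cast le_top)).contDiffWithinAt)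

lemma itd_sub (hf : ContDiff ℝ ∞ f) (hg : ContDiff ℝ ∞ g) :
    iteratedDeriv n (fun t => f t - g t) x = iteratedDeriv n f x - iteratedDeriv n g x := by
  rw [← iteratedDerivWithin_univ, ← iteratedDerivWithin_univ (f := f),
    ← iteratedDerivWithin_univ (f := g)]
  exact iteratedDerivWithin_sub (Set.mem_univ x) uniqueDiffOn_univ
    ((hf.of_le (by exact_mod_cast le_top)).contDiffWithinAt)
    ((hg.of_le (by exact_mod_cast le_top)).contDiffWithinAt)

lemma itd_cmul (c : ℝ) (hf : ContDiff ℝ ∞ f) :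
    iteratedDeriv n (fun t => c * f t) x = c * iteratedDeriv n f x := by
  rw [← iteratedDerivWithin_univ, ← iteratedDerivWithin_univ (f := f)]
  exact iteratedDerivWithin_const_mul (Set.mem_univ x) uniqueDiffOn_univ c
    ((hf.of_le (by exact_mod_cast le_top)).contDiffWithinAt)

lemma itd_sum {ι : Type*} (u : Finset ι) (F : ι → ℝ → ℝ)
    (h : ∀ i ∈ u, ContDiff ℝ ∞ (F i)) :
    iteratedDeriv n (fun t => ∑ i ∈ u, F i t) x = ∑ i ∈ u, iteratedDeriv n (F i) x := by
  classical
  induction u using Finset.induction with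
  | empty =>
    have : iteratedDeriv n (fun _ : ℝ => (0:ℝ)) = fun _ => 0 := by
      rw [iteratedDeriv_eq_iterate]
      rw [Function.iterate_fixed (by rw [deriv_const'])]
    simp [this]
  | @insert a u' hi ih =>
    rw [Finset.sum_insert hi]
    have : (fun t => ∑ i ∈ insert a u', F i t) = fun t => F a t + ∑ i ∈ u', F i t := by
      funext t; rw [Finset.sum_insert hi]
    rw [this, itd_add (h a (Finset.mem_insert_self a u'))
      (ContDiff.sum fun i hi' => h i (Finset.mem_insert_of_mem hi')),
      ih fun i hi' => h i (Finset.mem_insert_of_mem hi')]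

end wrappers

section key
variable {f g : ℝ → ℝ} {c : ℝ}

lemma smooth_diff (a : ℕ) (b : ℕ) (hf : ContDiff ℝ ∞ f) (hg : ContDiff ℝ ∞ g)
    {u : ℝ → ℝ} (hu : ContDiff ℝ ∞ u) :
    ContDiff ℝ ∞ (fun t => f t ^ a * g t ^ b * u t) :=
  ((hf.pow a).mul (hg.pow b)).mul hu

lemma cast_pow_aux (a : ℕ) (x : ℝ) : (a : ℝ) * (x ^ (a - 1) * x) = a * x ^ a := by
  cases a with
  | zero => simp
  | succ a => simp [pow_succ]

lemma key (hf : ContDiff ℝ ∞ f) (hg : ContDiff ℝ ∞ g)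
    (hf0 : f c = 0) (hg0 : g c = 0) :
    ∀ (q a b : ℕ) (u : ℝ → ℝ), ContDiff ℝ ∞ u →
      (q < a + b → iteratedDeriv q (fun t => f t ^ a * g t ^ b * u t) c = 0) ∧
      (q = a + b → iteratedDeriv q (fun t => f t ^ a * g t ^ b * u t) c =
        (Nat.factorial q : ℝ) * (deriv f c) ^ a * (deriv g c) ^ b * u c) := by
  intro q
  induction q with
  | zero =>
    intro a b u hu
    constructor
    · intro hlt
      rw [iteratedDeriv_zero]
      rcases Nat.pos_of_ne_zero (fun h => by omega : a + b ≠ 0) with _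
      rcases Nat.eq_zero_or_pos a with ha | ha
      · have hb : 0 < b := by omega
        rw [hg0, zero_pow (by omega)]; ring
      · rw [hf0, zero_pow (by omega)]; ring
    · intro he
      have ha : a = 0 := by omega
      have hb : b = 0 := by omega
      subst ha; subst hb
      simp [iteratedDeriv_zero]
  | succ q ih =>
    intro a b u hu
    have hdf : ContDiff ℝ ∞ (deriv f) := (contDiff_infty_iff_deriv.mp hf).2
    have hdg : ContDiff ℝ ∞ (deriv g) := (contDiff_infty_iff_deriv.mp hg).2
    have hdu : ContDiff ℝ ∞ (deriv u) := (contDiff_infty_iff_deriv.mp hu).2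
    have hdiff : ∀ (h : ℝ → ℝ), ContDiff ℝ ∞ h → ∀ t : ℝ, DifferentiableAt ℝ h t := by
      intro h hh t
      exact (hh.differentiable (by simp)).differentiableAt
    have hder : deriv (fun t => f t ^ a * g t ^ b * u t) =
        fun t => (a : ℝ) * (f t ^ (a - 1) * g t ^ b * (deriv f t * u t)) +
          ((b : ℝ) * (f t ^ a * g t ^ (b - 1) * (deriv g t * u t)) +
            f t ^ a * g t ^ b * deriv u t) := by
      funext t
      rw [deriv_fun_mul (((hdiff f hf t).fun_pow a).fun_mul ((hdiff g hg t).fun_pow b)) (hdiff u hu t),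
        deriv_fun_mul ((hdiff f hf t).fun_pow a) ((hdiff g hg t).fun_pow b),
        deriv_fun_pow (hdiff f hf t) a, deriv_fun_pow (hdiff g hg t) b]
      ring
    have hstep : iteratedDeriv (q + 1) (fun t => f t ^ a * g t ^ b * u t) c =
        (a : ℝ) * iteratedDeriv q (fun t => f t ^ (a-1) * g t ^ b * (deriv f t * u t)) c +
        ((b : ℝ) * iteratedDeriv q (fun t => f t ^ a * g t ^ (b-1) * (deriv g t * u t)) c +
          iteratedDeriv q (fun t => f t ^ a * g t ^ b * deriv u t) c) := by
      rw [iteratedDeriv_succ', hder]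
      rw [itd_add ((contDiff_const.mul (smooth_diff (a-1) b hf hg (hdf.mul hu))))
          ((contDiff_const.mul (smooth_diff a (b-1) hf hg (hdg.mul hu))).add
            (smooth_diff a b hf hg hdu)),
        itd_cmul _ (smooth_diff (a-1) b hf hg (hdf.mul hu)),
        itd_add (contDiff_const.mul (smooth_diff a (b-1) hf hg (hdg.mul hu)))
          (smooth_diff a b hf hg hdu),
        itd_cmul _ (smooth_diff a (b-1) hf hg (hdg.mul hu))]
    constructor
    · intro hlt
      rw [hstep]
      have h3 : iteratedDeriv q (fun t => f t ^ a * g t ^ b * deriv u t) c = 0 :=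
        (ih a b _ hdu).1 (by omega)
      have h1 : (a : ℝ) * iteratedDeriv q (fun t => f t ^ (a-1) * g t ^ b * (deriv f t * u t)) c
          = 0 := by
        rcases Nat.eq_zero_or_pos a with ha | ha
        · simp [ha]
        · rw [(ih (a-1) b _ (hdf.mul hu)).1 (by omega)]; ring
      have h2 : (b : ℝ) * iteratedDeriv q (fun t => f t ^ a * g t ^ (b-1) * (deriv g t * u t)) c
          = 0 := by
        rcases Nat.eq_zero_or_pos b with hb | hb
        · simp [hb]
        · rw [(ih a (b-1) _ (hdg.mul hu)).1 (by omega)]; ring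
      rw [h1, h2, h3]; ring
    · intro he
      rw [hstep]
      have h3 : iteratedDeriv q (fun t => f t ^ a * g t ^ b * deriv u t) c = 0 :=
        (ih a b _ hdu).1 (by omega)
      have h1 : (a : ℝ) * iteratedDeriv q (fun t => f t ^ (a-1) * g t ^ b * (deriv f t * u t)) c
          = (a : ℝ) * ((Nat.factorial q : ℝ) * (deriv f c) ^ a * (deriv g c) ^ b * u c) := by
        rcases Nat.eq_zero_or_pos a with ha | ha
        · simp [ha]
        · obtain ⟨a', rfl⟩ : ∃ a', a = a' + 1 := ⟨a-1, by omega⟩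
          rw [(ih (a'+1-1) b _ (hdf.mul hu)).2 (by omega)]
          simp only [Nat.add_sub_cancel]
          rw [pow_succ]; ring
      have h2 : (b : ℝ) * iteratedDeriv q (fun t => f t ^ a * g t ^ (b-1) * (deriv g t * u t)) c
          = (b : ℝ) * ((Nat.factorial q : ℝ) * (deriv f c) ^ a * (deriv g c) ^ b * u c) := by
        rcases Nat.eq_zero_or_pos b with hb | hb
        · simp [hb]
        · obtain ⟨b', rfl⟩ : ∃ b', b = b' + 1 := ⟨b-1, by omega⟩
          rw [(ih a (b'+1-1) _ (hdg.mul hu)).2 (by omega)]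
          simp only [Nat.add_sub_cancel]
          rw [pow_succ]; ring
      rw [h1, h2, h3]
      have hab : (a : ℝ) + (b : ℝ) = (q : ℝ) + 1 := by exact_mod_cast congrArg Nat.cast he.symm
      have hfac : ((q+1).factorial : ℝ) = ((q:ℝ)+1) * (q.factorial : ℝ) := by
        rw [Nat.factorial_succ]; push_cast; ring
      rw [hfac]
      linear_combination ((q.factorial : ℝ) * (deriv f c)^a * (deriv g c)^b * u c) * hab
end key

lemma term_val {f g : ℝ → ℝ} {c : ℝ} (hf : ContDiff ℝ ∞ f) (hg : ContDiff ℝ ∞ g)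
    (hf0 : f c = 0) (hg0 : g c = 0) (C : ℝ) (a b q : ℕ) (u : ℝ → ℝ) (hu : ContDiff ℝ ∞ u)
    (h : C = 0 ∨ a + b = q) :
    iteratedDeriv q (fun t => C * (f t ^ a * g t ^ b * u t)) c =
      C * ((Nat.factorial q : ℝ) * (deriv f c) ^ a * (deriv g c) ^ b * u c) := by
  rw [itd_cmul C (smooth_diff a b hf hg hu)]
  rcases h with h | h
  · simp [h]
  · rw [(key hf hg hf0 hg0 q a b u hu).2 h.symm]


lemma derivGx (m n : ℕ) (b a : ℝ) : deriv (fun x => Gpoly m n x b) a =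
    ∑ l ∈ Finset.range (n / 2 + 1),
      ((m + 2 * l : ℕ) : ℝ) * ((-1 : ℝ) ^ l * a ^ (m + 2 * l - 1) * b ^ (n - 2 * l) /
        ((Nat.factorial (m + 2 * l) : ℝ) * (Nat.factorial (n - 2 * l) : ℝ))) := by
  have h : HasDerivAt (fun x => Gpoly m n x b)
      (∑ l ∈ Finset.range (n / 2 + 1),
        ((-1 : ℝ) ^ l * (((m + 2 * l : ℕ) : ℝ) * a ^ (m + 2 * l - 1)) * b ^ (n - 2 * l) /
          ((Nat.factorial (m + 2 * l) : ℝ) * (Nat.factorial (n - 2 * l) : ℝ)))) a := by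
    unfold Gpoly
    exact HasDerivAt.fun_sum fun l _ =>
      (((hasDerivAt_pow (m + 2 * l) a).const_mul ((-1 : ℝ) ^ l)).mul_const
        (b ^ (n - 2 * l))).div_const _
  rw [h.deriv]
  exact Finset.sum_congr rfl fun l _ => by ring

lemma derivGy (m n : ℕ) (a b : ℝ) : deriv (fun y => Gpoly m n a y) b =
    ∑ l ∈ Finset.range (n / 2 + 1),
      ((n - 2 * l : ℕ) : ℝ) * ((-1 : ℝ) ^ l * a ^ (m + 2 * l) * b ^ (n - 2 * l - 1) /
        ((Nat.factorial (m + 2 * l) : ℝ) * (Nat.factorial (n - 2 * l) : ℝ))) := by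
  have h : HasDerivAt (fun y => Gpoly m n a y)
      (∑ l ∈ Finset.range (n / 2 + 1),
        (((-1 : ℝ) ^ l * a ^ (m + 2 * l)) * (((n - 2 * l : ℕ) : ℝ) * b ^ (n - 2 * l - 1)) /
          ((Nat.factorial (m + 2 * l) : ℝ) * (Nat.factorial (n - 2 * l) : ℝ)))) b := by
    unfold Gpoly
    exact HasDerivAt.fun_sum fun l _ =>
      (((hasDerivAt_pow (n - 2 * l) b).const_mul ((-1 : ℝ) ^ l * a ^ (m + 2 * l)))).div_const _
  rw [h.deriv]
  exact Finset.sum_congr rfl fun l _ => by ring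

section algebra
open Complex

lemma helper_even (n : ℕ) (f : ℕ → ℝ) (h : ∀ j, f (2 * j + 1) = 0) :
    ∑ k ∈ Finset.range (n + 1), f k = ∑ l ∈ Finset.range (n / 2 + 1), f (2 * l) := by
  rw [← Finset.sum_filter_add_sum_filter_not (Finset.range (n + 1)) (fun k => Even k)]
  have h2 : ∑ k ∈ (Finset.range (n + 1)).filter (fun k => ¬Even k), f k = 0 := by
    apply Finset.sum_eq_zero
    intro k hk
    simp only [Finset.mem_filter, Nat.even_iff] at hk
    obtain ⟨j, hj⟩ : ∃ j, k = 2 * j + 1 := ⟨k / 2, by omega⟩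
    rw [hj]; exact h j
  rw [h2, add_zero]
  apply Finset.sum_nbij' (fun k => k / 2) (fun l => 2 * l)
  · intro a ha; simp only [Finset.mem_filter, Finset.mem_range, Nat.even_iff] at ha ⊢; omega
  · intro a ha; simp only [Finset.mem_filter, Finset.mem_range, Nat.even_iff] at ha ⊢; omega
  · intro a ha; simp only [Finset.mem_filter, Nat.even_iff] at ha; omega
  · intro a ha; omega
  · intro a ha
    simp only [Finset.mem_filter, Nat.even_iff] at ha
    congr 1; omega

lemma helper_odd (n : ℕ) (f : ℕ → ℝ) (h : ∀ j, f (2 * j) = 0) :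
    ∑ k ∈ Finset.range (n + 2), f k = ∑ l ∈ Finset.range (n / 2 + 1), f (2 * l + 1) := by
  rw [← Finset.sum_filter_add_sum_filter_not (Finset.range (n + 2)) (fun k => Odd k)]
  have h2 : ∑ k ∈ (Finset.range (n + 2)).filter (fun k => ¬Odd k), f k = 0 := by
    apply Finset.sum_eq_zero
    intro k hk
    simp only [Finset.mem_filter, Nat.odd_iff] at hk
    obtain ⟨j, hj⟩ : ∃ j, k = 2 * j := ⟨k / 2, by omega⟩
    rw [hj]; exact h j
  rw [h2, add_zero]
  apply Finset.sum_nbij' (fun k => k / 2) (fun l => 2 * l + 1)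
  · intro a ha; simp only [Finset.mem_filter, Finset.mem_range, Nat.odd_iff] at ha ⊢; omega
  · intro a ha; simp only [Finset.mem_filter, Finset.mem_range, Nat.odd_iff] at ha ⊢; omega
  · intro a ha; simp only [Finset.mem_filter, Nat.odd_iff] at ha; omega
  · intro a ha; omega
  · intro a ha
    simp only [Finset.mem_filter, Nat.odd_iff] at ha
    congr 1; omega

lemma I_pow_even (l : ℕ) : (Complex.I) ^ (2 * l) = ((-1 : ℝ) ^ l : ℝ) := by
  rw [pow_mul, Complex.I_sq]
  push_cast; ring

lemma I_pow_odd (l : ℕ) : (Complex.I) ^ (2 * l + 1) = ((-1 : ℝ) ^ l : ℝ) * Complex.I := by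
  rw [pow_succ, I_pow_even]

lemma zpow_expand (X Y : ℝ) (n : ℕ) :
    ((Y : ℂ) + (X : ℂ) * Complex.I) ^ n =
      ∑ k ∈ Finset.range (n + 1),
        ((X ^ k * Y ^ (n - k) * (n.choose k) : ℝ) : ℂ) * Complex.I ^ k := by
  rw [add_comm, add_pow]
  apply Finset.sum_congr rfl
  intro k _
  rw [mul_pow]
  push_cast
  ring

lemma S1gen (X Y : ℝ) (n : ℕ) :
    ∑ l ∈ Finset.range (n / 2 + 1), (-1 : ℝ) ^ l * X ^ (2 * l) * Y ^ (n - 2 * l) /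
      ((Nat.factorial (2 * l) : ℝ) * (Nat.factorial (n - 2 * l) : ℝ)) =
    (((Y : ℂ) + (X : ℂ) * Complex.I) ^ n).re / (Nat.factorial n : ℝ) := by
  rw [zpow_expand, Complex.re_sum]
  have hterm : ∀ k, (((X ^ k * Y ^ (n - k) * (n.choose k) : ℝ) : ℂ) * Complex.I ^ k).re =
      (X ^ k * Y ^ (n - k) * (n.choose k)) * (Complex.I ^ k).re := fun k =>
    Complex.re_ofReal_mul _ _
  simp only [hterm]
  rw [helper_even n _ (fun j => by rw [I_pow_odd, Complex.re_ofReal_mul, Complex.I_re]; ring)]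
  rw [Finset.sum_div]
  apply Finset.sum_congr rfl
  intro l hl
  rw [I_pow_even]
  have h2l : 2 * l ≤ n := by
    simp only [Finset.mem_range] at hl; omega
  have hc := Nat.choose_mul_factorial_mul_factorial h2l
  have hcr : ((n.choose (2*l) : ℝ)) * (Nat.factorial (2*l) : ℝ) * (Nat.factorial (n - 2*l) : ℝ)
      = (Nat.factorial n : ℝ) := by exact_mod_cast congrArg Nat.cast hc
  have f1 : (Nat.factorial (2*l) : ℝ) ≠ 0 := Nat.cast_ne_zero.mpr (Nat.factorial_ne_zero _)
  have f2 : (Nat.factorial (n - 2*l) : ℝ) ≠ 0 := Nat.cast_ne_zero.mpr (Nat.factorial_ne_zero _)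
  have f3 : (Nat.factorial n : ℝ) ≠ 0 := Nat.cast_ne_zero.mpr (Nat.factorial_ne_zero _)
  have f4 : ((n.choose (2*l) : ℕ) : ℝ) ≠ 0 :=
    Nat.cast_ne_zero.mpr (Nat.choose_pos h2l).ne'
  rw [Complex.ofReal_re, ← hcr]
  field_simp

lemma S2gen (X Y : ℝ) (n : ℕ) :
    ∑ l ∈ Finset.range (n / 2 + 1), (-1 : ℝ) ^ l * X ^ (2 * l + 1) * Y ^ (n - 2 * l) /
      ((Nat.factorial (2 * l + 1) : ℝ) * (Nat.factorial (n - 2 * l) : ℝ)) =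
    (((Y : ℂ) + (X : ℂ) * Complex.I) ^ (n + 1)).im / (Nat.factorial (n + 1) : ℝ) := by
  rw [zpow_expand, Complex.im_sum]
  have hterm : ∀ k, (((X ^ k * Y ^ (n + 1 - k) * ((n+1).choose k) : ℝ) : ℂ) * Complex.I ^ k).im =
      (X ^ k * Y ^ (n + 1 - k) * ((n+1).choose k)) * (Complex.I ^ k).im := fun k =>
    Complex.im_ofReal_mul _ _
  simp only [hterm]
  rw [helper_odd n _ (fun j => by rw [I_pow_even, Complex.ofReal_im]; ring)]
  rw [Finset.sum_div]
  apply Finset.sum_congr rfl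
  intro l hl
  have h2l : 2 * l + 1 ≤ n + 1 := by
    simp only [Finset.mem_range] at hl; omega
  have hc := Nat.choose_mul_factorial_mul_factorial h2l
  have hcr : (((n+1).choose (2*l+1) : ℝ)) * (Nat.factorial (2*l+1) : ℝ) *
      (Nat.factorial (n + 1 - (2*l+1)) : ℝ) = (Nat.factorial (n+1) : ℝ) := by
    exact_mod_cast congrArg Nat.cast hc
  have f1 : (Nat.factorial (2*l+1) : ℝ) ≠ 0 := Nat.cast_ne_zero.mpr (Nat.factorial_ne_zero _)
  have f2 : (Nat.factorial (n + 1 - (2*l+1)) : ℝ) ≠ 0 :=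
    Nat.cast_ne_zero.mpr (Nat.factorial_ne_zero _)
  have f3 : (Nat.factorial (n+1) : ℝ) ≠ 0 := Nat.cast_ne_zero.mpr (Nat.factorial_ne_zero _)
  have hsub : n + 1 - (2*l+1) = n - 2*l := by omega
  rw [hsub] at hcr f2
  have f4 : (((n+1).choose (2*l+1) : ℕ) : ℝ) ≠ 0 :=
    Nat.cast_ne_zero.mpr (Nat.choose_pos h2l).ne'
  rw [I_pow_odd, Complex.im_ofReal_mul, Complex.I_im, hsub, ← hcr]
  field_simp

end algebra

section derived
open Complex

lemma coeff_cancel (c A B x : ℝ) (hc : c ≠ 0) : c * (x / (A * (c * B))) = x / (A * B) := by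
  rcases eq_or_ne A 0 with rfl | hA
  · simp
  rcases eq_or_ne B 0 with rfl | hB
  · simp
  field_simp

lemma S3' (X Y : ℝ) (n : ℕ) :
    ∑ l ∈ Finset.range (n / 2 + 1),
      ((1 + 2 * l : ℕ) : ℝ) * ((-1 : ℝ) ^ l * X ^ (1 + 2 * l - 1) * Y ^ (n - 2 * l) /
        ((Nat.factorial (1 + 2 * l) : ℝ) * (Nat.factorial (n - 2 * l) : ℝ))) =
    (((Y : ℂ) + (X : ℂ) * Complex.I) ^ n).re / (Nat.factorial n : ℝ) := by
  rw [← S1gen X Y n]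
  apply Finset.sum_congr rfl
  intro l _
  have e1 : 1 + 2 * l - 1 = 2 * l := by omega
  have e2 : 1 + 2 * l = 2 * l + 1 := by omega
  rw [e1, e2, Nat.factorial_succ]
  have f1 : (Nat.factorial (2 * l) : ℝ) ≠ 0 := Nat.cast_ne_zero.mpr (Nat.factorial_ne_zero _)
  have f2 : (Nat.factorial (n - 2 * l) : ℝ) ≠ 0 := Nat.cast_ne_zero.mpr (Nat.factorial_ne_zero _)
  push_cast
  field_simp

lemma S4' (X Y : ℝ) (n : ℕ) :
    ∑ l ∈ Finset.range (n / 2 + 1),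
      ((n - 2 * l : ℕ) : ℝ) * ((-1 : ℝ) ^ l * X ^ (1 + 2 * l) * Y ^ (n - 2 * l - 1) /
        ((Nat.factorial (1 + 2 * l) : ℝ) * (Nat.factorial (n - 2 * l) : ℝ))) =
    (((Y : ℂ) + (X : ℂ) * Complex.I) ^ n).im / (Nat.factorial n : ℝ) := by
  cases n with
  | zero => simp
  | succ m =>
    rw [← S2gen X Y m]
    have hterm : ∀ l ∈ Finset.range (m / 2 + 1),
        ((m + 1 - 2 * l : ℕ) : ℝ) * ((-1 : ℝ) ^ l * X ^ (1 + 2 * l) * Y ^ (m + 1 - 2 * l - 1) /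
          ((Nat.factorial (1 + 2 * l) : ℝ) * (Nat.factorial (m + 1 - 2 * l) : ℝ))) =
        (-1 : ℝ) ^ l * X ^ (2 * l + 1) * Y ^ (m - 2 * l) /
          ((Nat.factorial (2 * l + 1) : ℝ) * (Nat.factorial (m - 2 * l) : ℝ)) := by
      intro l hl
      simp only [Finset.mem_range] at hl
      have h2l : 2 * l ≤ m := by omega
      have e1 : m + 1 - 2 * l = (m - 2 * l) + 1 := by omega
      have e2 : m + 1 - 2 * l - 1 = m - 2 * l := by omega
      have e3 : 1 + 2 * l = 2 * l + 1 := by omega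
      rw [e1, e3, Nat.add_sub_cancel,
        show ((m - 2*l)+1).factorial = ((m-2*l)+1) * (m-2*l).factorial from Nat.factorial_succ _,
        Nat.cast_mul]
      exact coeff_cancel _ _ _ _ (Nat.cast_ne_zero.mpr (Nat.succ_ne_zero _))
    rcases Nat.even_or_odd m with he | ho
    · have hr : (m + 1) / 2 + 1 = m / 2 + 1 := by
        obtain ⟨k, rfl⟩ := he; omega
      rw [hr]
      exact Finset.sum_congr rfl hterm
    · have hr : (m + 1) / 2 + 1 = (m / 2 + 1) + 1 := by
        obtain ⟨k, rfl⟩ := ho; omega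
      rw [hr, Finset.sum_range_succ]
      have hz : ((m + 1 - 2 * (m / 2 + 1) : ℕ) : ℝ) = 0 := by
        obtain ⟨k, rfl⟩ := ho
        norm_num
        omega
      rw [hz, zero_mul, add_zero]
      exact Finset.sum_congr rfl hterm

lemma S5' (X Y : ℝ) (n : ℕ) :
    ∑ l ∈ Finset.range ((n + 1) / 2 + 1),
      ((0 + 2 * l : ℕ) : ℝ) * ((-1 : ℝ) ^ l * X ^ (0 + 2 * l - 1) * Y ^ (n + 1 - 2 * l) /
        ((Nat.factorial (0 + 2 * l) : ℝ) * (Nat.factorial (n + 1 - 2 * l) : ℝ))) =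
    -((((Y : ℂ) + (X : ℂ) * Complex.I) ^ n).im / (Nat.factorial n : ℝ)) := by
  rw [Finset.sum_range_succ']
  simp only [Nat.zero_add, Nat.mul_zero, Nat.cast_zero, zero_mul, add_zero]
  cases n with
  | zero =>
    simp
  | succ m =>
    rw [← S2gen X Y m]
    have hr : (m + 1 + 1) / 2 = m / 2 + 1 := by omega
    rw [hr]
    rw [← Finset.sum_neg_distrib]
    apply Finset.sum_congr rfl
    intro i hi
    simp only [Finset.mem_range] at hi
    have h2i : 2 * i ≤ m := by omega
    have e1 : 2 * (i + 1) = (2 * i + 1) + 1 := by omega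
    have e2 : 2 * (i + 1) - 1 = 2 * i + 1 := by omega
    have e3 : m + 1 + 1 - 2 * (i + 1) = m - 2 * i := by omega
    rw [e2, e3, e1, Nat.factorial_succ, pow_succ]
    have f1 : (Nat.factorial (2 * i + 1) : ℝ) ≠ 0 := Nat.cast_ne_zero.mpr (Nat.factorial_ne_zero _)
    have f2 : (Nat.factorial (m - 2 * i) : ℝ) ≠ 0 := Nat.cast_ne_zero.mpr (Nat.factorial_ne_zero _)
    push_cast
    field_simp

lemma S6' (X Y : ℝ) (n : ℕ) :
    ∑ l ∈ Finset.range ((n + 1) / 2 + 1),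
      ((n + 1 - 2 * l : ℕ) : ℝ) * ((-1 : ℝ) ^ l * X ^ (0 + 2 * l) * Y ^ (n + 1 - 2 * l - 1) /
        ((Nat.factorial (0 + 2 * l) : ℝ) * (Nat.factorial (n + 1 - 2 * l) : ℝ))) =
    (((Y : ℂ) + (X : ℂ) * Complex.I) ^ n).re / (Nat.factorial n : ℝ) := by
  rw [← S1gen X Y n]
  have hterm : ∀ l ∈ Finset.range (n / 2 + 1),
      ((n + 1 - 2 * l : ℕ) : ℝ) * ((-1 : ℝ) ^ l * X ^ (0 + 2 * l) * Y ^ (n + 1 - 2 * l - 1) /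
        ((Nat.factorial (0 + 2 * l) : ℝ) * (Nat.factorial (n + 1 - 2 * l) : ℝ))) =
      (-1 : ℝ) ^ l * X ^ (2 * l) * Y ^ (n - 2 * l) /
        ((Nat.factorial (2 * l) : ℝ) * (Nat.factorial (n - 2 * l) : ℝ)) := by
    intro l hl
    simp only [Finset.mem_range] at hl
    have h2l : 2 * l ≤ n := by omega
    have e1 : n + 1 - 2 * l = (n - 2 * l) + 1 := by omega
    have e2 : n + 1 - 2 * l - 1 = n - 2 * l := by omega
    have e3 : 0 + 2 * l = 2 * l := by omega
    rw [e1, e3, Nat.add_sub_cancel,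
      show ((n - 2*l)+1).factorial = ((n-2*l)+1) * (n-2*l).factorial from Nat.factorial_succ _,
      Nat.cast_mul]
    exact coeff_cancel _ _ _ _ (Nat.cast_ne_zero.mpr (Nat.succ_ne_zero _))
  rcases Nat.even_or_odd n with he | ho
  · have hr : (n + 1) / 2 + 1 = n / 2 + 1 := by obtain ⟨k, rfl⟩ := he; omega
    rw [hr]
    exact Finset.sum_congr rfl hterm
  · have hr : (n + 1) / 2 + 1 = (n / 2 + 1) + 1 := by obtain ⟨k, rfl⟩ := ho; omega
    rw [hr, Finset.sum_range_succ]
    have hz : ((n + 1 - 2 * (n / 2 + 1) : ℕ) : ℝ) = 0 := by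
      obtain ⟨k, rfl⟩ := ho; norm_num; omega
    rw [hz, zero_mul, add_zero]
    exact Finset.sum_congr rfl hterm

end derived



section values
variable {r s : ℝ → ℝ} {tstar : ℝ}

lemma gcoef_val (hr : ContDiff ℝ ∞ r) (hs : ContDiff ℝ ∞ s) (m n q : ℕ) (hq : q = m + n) :
    gcoef r s tstar m n q =
      ∑ l ∈ Finset.range (n / 2 + 1),
        (-1 : ℝ) ^ l * (deriv r tstar) ^ (m + 2 * l) * (deriv s tstar) ^ (n - 2 * l) /
          ((Nat.factorial (m + 2 * l) : ℝ) * (Nat.factorial (n - 2 * l) : ℝ)) := by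
  have hfx : ContDiff ℝ ∞ (fun t => r t - r tstar) := hr.sub contDiff_const
  have hfy : ContDiff ℝ ∞ (fun t => s t - s tstar) := hs.sub contDiff_const
  have hfx0 : (fun t => r t - r tstar) tstar = 0 := sub_self _
  have hfy0 : (fun t => s t - s tstar) tstar = 0 := sub_self _
  unfold gcoef
  have hfun : (fun t => Gpoly m n (r t - r tstar) (s t - s tstar)) =
      fun t => ∑ l ∈ Finset.range (n / 2 + 1),
        ((-1 : ℝ) ^ l / ((Nat.factorial (m + 2 * l) : ℝ) * (Nat.factorial (n - 2 * l) : ℝ))) *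
          ((r t - r tstar) ^ (m + 2 * l) * (s t - s tstar) ^ (n - 2 * l) * (fun _ : ℝ => (1:ℝ)) t) := by
    funext t
    unfold Gpoly
    exact Finset.sum_congr rfl fun l _ => by ring
  rw [hfun, itd_sum _ _ (fun l _ => contDiff_const.mul (smooth_diff _ _ hfx hfy contDiff_const))]
  rw [Finset.mul_sum]
  apply Finset.sum_congr rfl
  intro l hl
  simp only [Finset.mem_range] at hl
  rw [term_val hfx hfy hfx0 hfy0 _ _ _ _ _ contDiff_const (Or.inr (by omega))]
  have hdx : deriv (fun t => r t - r tstar) tstar = deriv r tstar := deriv_sub_const _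
  have hdy : deriv (fun t => s t - s tstar) tstar = deriv s tstar := deriv_sub_const _
  rw [hdx, hdy]
  have fq : (Nat.factorial q : ℝ) ≠ 0 := Nat.cast_ne_zero.mpr (Nat.factorial_ne_zero _)
  field_simp

lemma gtcoef_val (hr : ContDiff ℝ ∞ r) (hs : ContDiff ℝ ∞ s) (am : ℝ) (m n q : ℕ)
    (hq : q + 1 = m + n) :
    gtcoef am r s tstar m n q =
      am * ((∑ l ∈ Finset.range (n / 2 + 1),
          ((m + 2 * l : ℕ) : ℝ) * ((-1 : ℝ) ^ l * (deriv r tstar) ^ (m + 2 * l - 1) *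
            (deriv s tstar) ^ (n - 2 * l) /
            ((Nat.factorial (m + 2 * l) : ℝ) * (Nat.factorial (n - 2 * l) : ℝ)))) * deriv s tstar -
        (∑ l ∈ Finset.range (n / 2 + 1),
          ((n - 2 * l : ℕ) : ℝ) * ((-1 : ℝ) ^ l * (deriv r tstar) ^ (m + 2 * l) *
            (deriv s tstar) ^ (n - 2 * l - 1) /
            ((Nat.factorial (m + 2 * l) : ℝ) * (Nat.factorial (n - 2 * l) : ℝ)))) * deriv r tstar) := by
  have hfx : ContDiff ℝ ∞ (fun t => r t - r tstar) := hr.sub contDiff_const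
  have hfy : ContDiff ℝ ∞ (fun t => s t - s tstar) := hs.sub contDiff_const
  have hfx0 : (fun t => r t - r tstar) tstar = 0 := sub_self _
  have hfy0 : (fun t => s t - s tstar) tstar = 0 := sub_self _
  have hdr : ContDiff ℝ ∞ (deriv r) := (contDiff_infty_iff_deriv.mp hr).2
  have hds : ContDiff ℝ ∞ (deriv s) := (contDiff_infty_iff_deriv.mp hs).2
  unfold gtcoef
  have hfun : (fun t =>
        deriv (fun x => Gpoly m n x (s t - s tstar)) (r t - r tstar) * deriv s t -
          deriv (fun y => Gpoly m n (r t - r tstar) y) (s t - s tstar) * deriv r t) =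
      fun t =>
        (∑ l ∈ Finset.range (n / 2 + 1),
          (((m + 2 * l : ℕ) : ℝ) * (-1 : ℝ) ^ l /
            ((Nat.factorial (m + 2 * l) : ℝ) * (Nat.factorial (n - 2 * l) : ℝ))) *
          ((r t - r tstar) ^ (m + 2 * l - 1) * (s t - s tstar) ^ (n - 2 * l) * deriv s t)) -
        (∑ l ∈ Finset.range (n / 2 + 1),
          (((n - 2 * l : ℕ) : ℝ) * (-1 : ℝ) ^ l /
            ((Nat.factorial (m + 2 * l) : ℝ) * (Nat.factorial (n - 2 * l) : ℝ))) *
          ((r t - r tstar) ^ (m + 2 * l) * (s t - s tstar) ^ (n - 2 * l - 1) * deriv r t)) := by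
    funext t
    rw [derivGx, derivGy, Finset.sum_mul, Finset.sum_mul]
    congr 1
    · exact Finset.sum_congr rfl fun l _ => by ring
    · exact Finset.sum_congr rfl fun l _ => by ring
  rw [hfun]
  rw [itd_sub
    (ContDiff.sum fun l _ => contDiff_const.mul (smooth_diff _ _ hfx hfy hds))
    (ContDiff.sum fun l _ => contDiff_const.mul (smooth_diff _ _ hfx hfy hdr))]
  rw [itd_sum _ _ (fun l _ => contDiff_const.mul (smooth_diff _ _ hfx hfy hds)),
    itd_sum _ _ (fun l _ => contDiff_const.mul (smooth_diff _ _ hfx hfy hdr))]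
  have hdx : deriv (fun t => r t - r tstar) tstar = deriv r tstar := deriv_sub_const _
  have hdy : deriv (fun t => s t - s tstar) tstar = deriv s tstar := deriv_sub_const _
  have fq : (Nat.factorial q : ℝ) ≠ 0 := Nat.cast_ne_zero.mpr (Nat.factorial_ne_zero _)
  have e1 : ∀ l ∈ Finset.range (n / 2 + 1),
      iteratedDeriv q (fun t =>
        (((m + 2 * l : ℕ) : ℝ) * (-1 : ℝ) ^ l /
          ((Nat.factorial (m + 2 * l) : ℝ) * (Nat.factorial (n - 2 * l) : ℝ))) *
        ((r t - r tstar) ^ (m + 2 * l - 1) * (s t - s tstar) ^ (n - 2 * l) * deriv s t)) tstar =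
      (((m + 2 * l : ℕ) : ℝ) * (-1 : ℝ) ^ l /
          ((Nat.factorial (m + 2 * l) : ℝ) * (Nat.factorial (n - 2 * l) : ℝ))) *
        ((Nat.factorial q : ℝ) * (deriv r tstar) ^ (m + 2 * l - 1) *
          (deriv s tstar) ^ (n - 2 * l) * deriv s tstar) := by
    intro l hl
    simp only [Finset.mem_range] at hl
    rw [term_val hfx hfy hfx0 hfy0 _ _ _ _ _ hds ?_, hdx, hdy]
    rcases Nat.eq_zero_or_pos (m + 2 * l) with h0 | h0
    · left; rw [h0]; simp
    · right; omega
  have e2 : ∀ l ∈ Finset.range (n / 2 + 1),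
      iteratedDeriv q (fun t =>
        (((n - 2 * l : ℕ) : ℝ) * (-1 : ℝ) ^ l /
          ((Nat.factorial (m + 2 * l) : ℝ) * (Nat.factorial (n - 2 * l) : ℝ))) *
        ((r t - r tstar) ^ (m + 2 * l) * (s t - s tstar) ^ (n - 2 * l - 1) * deriv r t)) tstar =
      (((n - 2 * l : ℕ) : ℝ) * (-1 : ℝ) ^ l /
          ((Nat.factorial (m + 2 * l) : ℝ) * (Nat.factorial (n - 2 * l) : ℝ))) *
        ((Nat.factorial q : ℝ) * (deriv r tstar) ^ (m + 2 * l) *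
          (deriv s tstar) ^ (n - 2 * l - 1) * deriv r tstar) := by
    intro l hl
    simp only [Finset.mem_range] at hl
    rw [term_val hfx hfy hfx0 hfy0 _ _ _ _ _ hdr ?_, hdx, hdy]
    rcases Nat.eq_zero_or_pos (n - 2 * l) with h0 | h0
    · left; rw [h0]; simp
    · right; omega
  rw [Finset.sum_congr rfl e1, Finset.sum_congr rfl e2]
  simp only [Finset.mul_sum, Finset.sum_mul, mul_sub]
  congr 1 <;>
  · apply Finset.sum_congr rfl
    intro l _
    field_simp

end values


/-- The determinant of the `2×2` transmission system satisfies
`g⁻_{0,p,p}·g̃⁻_{1,p-1,p-1} - g⁻_{1,p-1,p}·g̃⁻_{0,p,p-1} = a₋·p·((r'(t*))²+(s'(t*))²)^p/(p!)²`,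
which is positive when `a₋ > 0` and `(r'(t*), s'(t*)) ≠ (0,0)`. -/
theorem stmt11 (r s : ℝ → ℝ) (hr : ContDiff ℝ (⊤ : ℕ∞) r) (hs : ContDiff ℝ (⊤ : ℕ∞) s)
    (tstar am : ℝ) (ham : 0 < am)
    (hv : (deriv r tstar, deriv s tstar) ≠ (0, 0))
    (M p : ℕ) (hp : 1 ≤ p) (hpM : p ≤ M) :
    gcoef r s tstar 0 p p * gtcoef am r s tstar 1 (p - 1) (p - 1) -
        gcoef r s tstar 1 (p - 1) p * gtcoef am r s tstar 0 p (p - 1) =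
      am * (p : ℝ) * ((deriv r tstar) ^ 2 + (deriv s tstar) ^ 2) ^ p /
        ((Nat.factorial p : ℝ)) ^ 2 ∧
    0 < gcoef r s tstar 0 p p * gtcoef am r s tstar 1 (p - 1) (p - 1) -
        gcoef r s tstar 1 (p - 1) p * gtcoef am r s tstar 0 p (p - 1) := by
  have hr' : ContDiff ℝ ∞ r := hr.of_le (by simp)
  have hs' : ContDiff ℝ ∞ s := hs.of_le (by simp)
  have hX := deriv r tstar
  set X := deriv r tstar with hXdef
  set Y := deriv s tstar with hYdef
  have hA : gcoef r s tstar 0 p p = ((((Y:ℂ) + (X:ℂ) * Complex.I)) ^ p).re /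
      (Nat.factorial p : ℝ) := by
    rw [gcoef_val hr' hs' 0 p p (by omega)]
    rw [← S1gen X Y p]
    apply Finset.sum_congr rfl
    intro l _
    rw [show 0 + 2 * l = 2 * l from by omega]
  have hB : gcoef r s tstar 1 (p-1) p = ((((Y:ℂ) + (X:ℂ) * Complex.I)) ^ p).im /
      (Nat.factorial p : ℝ) := by
    rw [gcoef_val hr' hs' 1 (p-1) p (by omega)]
    have h2 := S2gen X Y (p-1)
    rw [show p - 1 + 1 = p from by omega] at h2
    rw [← h2]
    apply Finset.sum_congr rfl
    intro l _
    rw [show 1 + 2 * l = 2 * l + 1 from by omega]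
  have hT1 : gtcoef am r s tstar 1 (p-1) (p-1) =
      am * (((((Y:ℂ) + (X:ℂ) * Complex.I)) ^ (p-1)).re / (Nat.factorial (p-1) : ℝ) * Y -
        ((((Y:ℂ) + (X:ℂ) * Complex.I)) ^ (p-1)).im / (Nat.factorial (p-1) : ℝ) * X) := by
    rw [gtcoef_val hr' hs' am 1 (p-1) (p-1) (by omega), S3' X Y (p-1), S4' X Y (p-1)]
  have hT2 : gtcoef am r s tstar 0 p (p-1) =
      am * (-(((((Y:ℂ) + (X:ℂ) * Complex.I)) ^ (p-1)).im / (Nat.factorial (p-1) : ℝ)) * Y -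
        ((((Y:ℂ) + (X:ℂ) * Complex.I)) ^ (p-1)).re / (Nat.factorial (p-1) : ℝ) * X) := by
    rw [gtcoef_val hr' hs' am 0 p (p-1) (by omega)]
    have h5 := S5' X Y (p-1)
    have h6 := S6' X Y (p-1)
    rw [show p - 1 + 1 = p from by omega] at h5 h6
    rw [h5, h6]
  have hzsplit : (((Y:ℂ) + (X:ℂ) * Complex.I)) ^ p =
      (((Y:ℂ) + (X:ℂ) * Complex.I)) ^ (p-1) * (((Y:ℂ) + (X:ℂ) * Complex.I)) := by
    rw [← pow_succ]
    congr 1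
    omega
  have hre : ((((Y:ℂ) + (X:ℂ) * Complex.I)) ^ p).re =
      ((((Y:ℂ) + (X:ℂ) * Complex.I)) ^ (p-1)).re * Y -
        ((((Y:ℂ) + (X:ℂ) * Complex.I)) ^ (p-1)).im * X := by
    rw [hzsplit, Complex.mul_re]
    simp
  have him : ((((Y:ℂ) + (X:ℂ) * Complex.I)) ^ p).im =
      ((((Y:ℂ) + (X:ℂ) * Complex.I)) ^ (p-1)).re * X +
        ((((Y:ℂ) + (X:ℂ) * Complex.I)) ^ (p-1)).im * Y := by
    rw [hzsplit, Complex.mul_im]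
    simp
  have hnq : ((((Y:ℂ) + (X:ℂ) * Complex.I)) ^ (p-1)).re ^ 2 +
      ((((Y:ℂ) + (X:ℂ) * Complex.I)) ^ (p-1)).im ^ 2 = (X^2 + Y^2) ^ (p-1) := by
    have h1 : ∀ w : ℂ, w.re ^ 2 + w.im ^ 2 = Complex.normSq w := fun w => by
      rw [Complex.normSq_apply]; ring
    rw [h1, map_pow]
    congr 1
    rw [Complex.normSq_apply]
    simp
    ring
  have hpowsplit : (X^2 + Y^2) ^ p = (X^2 + Y^2) ^ (p-1) * (X^2 + Y^2) := by
    rw [← pow_succ]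
    congr 1
    omega
  have hfacs : (Nat.factorial p : ℝ) = (p : ℝ) * (Nat.factorial (p-1) : ℝ) := by
    exact_mod_cast congrArg (Nat.cast (R := ℝ)) (Nat.mul_factorial_pred (by omega)).symm
  have f1 : (Nat.factorial (p-1) : ℝ) ≠ 0 := Nat.cast_ne_zero.mpr (Nat.factorial_ne_zero _)
  have hp0 : (0:ℝ) < (p : ℝ) := by exact_mod_cast Nat.pos_of_ne_zero (by omega)
  have hmain : gcoef r s tstar 0 p p * gtcoef am r s tstar 1 (p - 1) (p - 1) -
      gcoef r s tstar 1 (p - 1) p * gtcoef am r s tstar 0 p (p - 1) =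
      am * (p : ℝ) * (X ^ 2 + Y ^ 2) ^ p / ((Nat.factorial p : ℝ)) ^ 2 := by
    rw [hA, hB, hT1, hT2, hre, him, hpowsplit, ← hnq, hfacs]
    field_simp
    ring
  refine ⟨hmain, ?_⟩
  rw [hmain]
  have hXY : 0 < X ^ 2 + Y ^ 2 := by
    have hor : X ≠ 0 ∨ Y ≠ 0 := by
      by_contra h
      push_neg at h
      exact hv (by rw [Prod.mk.injEq]; exact ⟨h.1, h.2⟩)
    rcases hor with h | h
    · exact add_pos_of_pos_of_nonneg (pow_two_pos_of_ne_zero h) (sq_nonneg _)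
    · exact add_pos_of_nonneg_of_pos (sq_nonneg _) (pow_two_pos_of_ne_zero h)
  exact div_pos (mul_pos (mul_pos ham hp0) (pow_pos hXY p))
    (pow_pos (by exact_mod_cast Nat.factorial_pos p) 2)
end
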